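/- arXiv:1101.3136 — 3 statements merged into one kernel-verified Lean document; each statement's English description precedes it below -/
import Mathlib

section
/- Let d ≥ 1, ε > 0, let V_Γ, V : ℝᵈ → ℝ and E : ℝᵈ → ℝ be smooth, and let (q,p) : ℝ → ℝᵈ × ℝᵈ be a C¹ solution of the semiclassical flow equations. Define S(t) = ∫₀ᵗ [ p(s)·∇E(p(s)) − E(p(s)) − V(q(s)) ] ds and φ(t,x) = S(t) + p(t)·(x − q(t)). Let U : ℝ × ℝᵈ × ℝᵈ → ℂ be smooth and set ψ(t,x) = ε^{−d/4} U(t, (x−q(t))/√ε, x/ε) e^{i φ(t,x)/ε}. Then for every (t,x) ∈ ℝ × ℝᵈ, writing z = (x−q(t))/√ε and y = x/ε, one has the exact pointwise identity: iε ∂_t ψ + (ε²/2) Δ_x ψ − V_Γ(x/ε) ψ − V(x) ψ = ε^{−d/4} e^{i φ(t,x)/ε} [ ( E(p(t)) U + (1/2) Δ_y U + i p(t)·∇_y U − (1/2)|p(t)|² U − V_Γ(y) U ) + ( V(q(t)) + √ε ∇V(q(t))·z − V(q(t) + √ε z) ) U + √ε ( i (p(t) − ∇E(p(t)))·∇_z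 U + (∇_y·∇_z) U ) + ε ( i ∂_t U + (1/2) Δ_z U ) ], where all derivatives of U are evaluated at (t,z,y). -/
noncomputable section

/-- Partial derivative of a function on `ℝᵈ` in the `j`-th coordinate
direction. -/
def pd {d : ℕ} (f : (Fin d → ℝ) → ℂ) (j : Fin d) (x : Fin d → ℝ) : ℂ :=
  fderiv ℝ f x (Pi.single j 1)

set_option maxHeartbeats 2000000

section WPAux

variable {d : ℕ} {W : Type*} [NormedAddCommGroup W] [NormedSpace ℝ W]

private lemma wp_single_sum (v : Fin d → ℝ) : ∑ j, v j • (Pi.single j 1 : Fin d → ℝ) = v := by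
  conv_rhs => rw [← Finset.univ_sum_single v]
  refine Finset.sum_congr rfl fun j _ => ?_
  rw [← Pi.single_smul, smul_eq_mul, mul_one]

private lemma wp_decompZ (v : Fin d → ℝ) :
    ((0:ℝ), v, (0:Fin d → ℝ)) =
      ∑ j, v j • (((0:ℝ), Pi.single j (1:ℝ), (0:Fin d → ℝ)) : ℝ × (Fin d → ℝ) × (Fin d → ℝ)) := by
  have h := wp_single_sum v
  simp [Prod.ext_iff, Prod.fst_sum, Prod.snd_sum, h]

private lemma wp_decompY (v : Fin d → ℝ) :
    ((0:ℝ), (0:Fin d → ℝ), v) =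
      ∑ j, v j • (((0:ℝ), (0:Fin d → ℝ), Pi.single j (1:ℝ)) : ℝ × (Fin d → ℝ) × (Fin d → ℝ)) := by
  have h := wp_single_sum v
  simp [Prod.ext_iff, Prod.fst_sum, Prod.snd_sum, h]

private lemma wp_applyZ (L : (ℝ × (Fin d → ℝ) × (Fin d → ℝ)) →L[ℝ] W) (v : Fin d → ℝ) :
    L ((0:ℝ), v, (0:Fin d → ℝ)) = ∑ j, v j • L ((0:ℝ), Pi.single j 1, (0:Fin d → ℝ)) := by
  rw [wp_decompZ v, map_sum]
  simp only [map_smul]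

private lemma wp_split3 (L : (ℝ × (Fin d → ℝ) × (Fin d → ℝ)) →L[ℝ] W) (s a b : ℝ)
    (u v : Fin d → ℝ) :
    L (s, a • u, b • v) = s • L (1, 0, 0) + a • L ((0:ℝ), u, (0:Fin d → ℝ))
      + b • L ((0:ℝ), (0:Fin d → ℝ), v) := by
  have h : ((s, a • u, b • v) : ℝ × (Fin d → ℝ) × (Fin d → ℝ))
      = s • ((1:ℝ), (0:Fin d → ℝ), (0:Fin d → ℝ)) + a • ((0:ℝ), u, (0:Fin d → ℝ))
        + b • ((0:ℝ), (0:Fin d → ℝ), v) := by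
    simp [Prod.ext_iff]
  rw [h, map_add, map_add, map_smul, map_smul, map_smul]

private lemma wp_sliceZ (G : ℝ × (Fin d → ℝ) × (Fin d → ℝ) → W) (hG : Differentiable ℝ G)
    (t : ℝ) (z y v : Fin d → ℝ) :
    fderiv ℝ (fun z' => G (t, z', y)) z v = fderiv ℝ G (t, z, y) ((0:ℝ), v, (0:Fin d → ℝ)) := by
  have h0 : HasFDerivAt (fun z' : Fin d → ℝ => ((t, z', y) : ℝ × (Fin d → ℝ) × (Fin d → ℝ)))
      ((0 : (Fin d → ℝ) →L[ℝ] ℝ).prod ((ContinuousLinearMap.id ℝ (Fin d → ℝ)).prod 0)) z :=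
    (hasFDerivAt_const t z).prodMk ((hasFDerivAt_id z).prodMk (hasFDerivAt_const y z))
  have h1 : HasFDerivAt (fun z' => G (t, z', y))
      ((fderiv ℝ G (t, z, y)).comp ((0 : (Fin d → ℝ) →L[ℝ] ℝ).prod
        ((ContinuousLinearMap.id ℝ (Fin d → ℝ)).prod 0))) z :=
    (hG _).hasFDerivAt.comp z h0
  rw [h1.fderiv]
  simp

private lemma wp_sliceY (G : ℝ × (Fin d → ℝ) × (Fin d → ℝ) → W) (hG : Differentiable ℝ G)
    (t : ℝ) (z y v : Fin d → ℝ) :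
    fderiv ℝ (fun y' => G (t, z, y')) y v = fderiv ℝ G (t, z, y) ((0:ℝ), (0:Fin d → ℝ), v) := by
  have h0 : HasFDerivAt (fun y' : Fin d → ℝ => ((t, z, y') : ℝ × (Fin d → ℝ) × (Fin d → ℝ)))
      ((0 : (Fin d → ℝ) →L[ℝ] ℝ).prod ((0 : (Fin d → ℝ) →L[ℝ] (Fin d → ℝ)).prod
        (ContinuousLinearMap.id ℝ (Fin d → ℝ)))) y :=
    (hasFDerivAt_const t y).prodMk ((hasFDerivAt_const z y).prodMk (hasFDerivAt_id y))
  have h1 : HasFDerivAt (fun y' => G (t, z, y'))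
      ((fderiv ℝ G (t, z, y)).comp ((0 : (Fin d → ℝ) →L[ℝ] ℝ).prod
        ((0 : (Fin d → ℝ) →L[ℝ] (Fin d → ℝ)).prod (ContinuousLinearMap.id ℝ (Fin d → ℝ))))) y :=
    (hG _).hasFDerivAt.comp y h0
  rw [h1.fderiv]
  simp

private lemma wp_sliceT (G : ℝ × (Fin d → ℝ) × (Fin d → ℝ) → W) (hG : Differentiable ℝ G)
    (t : ℝ) (z y : Fin d → ℝ) :
    deriv (fun s => G (s, z, y)) t
      = fderiv ℝ G (t, z, y) ((1:ℝ), (0:Fin d → ℝ), (0:Fin d → ℝ)) := by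
  have h0 : HasDerivAt (fun s : ℝ => ((s, z, y) : ℝ × (Fin d → ℝ) × (Fin d → ℝ)))
      ((1:ℝ), (0:Fin d → ℝ), (0:Fin d → ℝ)) t :=
    (hasDerivAt_id t).prodMk (hasDerivAt_const t (z, y))
  exact ((hG _).hasFDerivAt.comp_hasDerivAt t h0).deriv

private lemma wp_hasY (G : ℝ × (Fin d → ℝ) × (Fin d → ℝ) → W) (hG : Differentiable ℝ G)
    (t : ℝ) (z y : Fin d → ℝ) :
    HasFDerivAt (fun y' => G (t, z, y'))
      ((fderiv ℝ G (t, z, y)).comp ((0 : (Fin d → ℝ) →L[ℝ] ℝ).prod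
        ((0 : (Fin d → ℝ) →L[ℝ] (Fin d → ℝ)).prod (ContinuousLinearMap.id ℝ (Fin d → ℝ))))) y :=
  (hG _).hasFDerivAt.comp y
    ((hasFDerivAt_const t y).prodMk ((hasFDerivAt_const z y).prodMk (hasFDerivAt_id y)))

private lemma wp_hasZ (G : ℝ × (Fin d → ℝ) × (Fin d → ℝ) → W) (hG : Differentiable ℝ G)
    (t : ℝ) (z y : Fin d → ℝ) :
    HasFDerivAt (fun z' => G (t, z', y))
      ((fderiv ℝ G (t, z, y)).comp ((0 : (Fin d → ℝ) →L[ℝ] ℝ).prod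
        ((ContinuousLinearMap.id ℝ (Fin d → ℝ)).prod 0))) z :=
  (hG _).hasFDerivAt.comp z
    ((hasFDerivAt_const t z).prodMk ((hasFDerivAt_id z).prodMk (hasFDerivAt_const y z)))

private lemma wp_sliceYY (G : ℝ × (Fin d → ℝ) × (Fin d → ℝ) → ℂ)
    (hG' : Differentiable ℝ (fderiv ℝ G)) (t : ℝ) (z y : Fin d → ℝ)
    (w : ℝ × (Fin d → ℝ) × (Fin d → ℝ)) (v : Fin d → ℝ) :
    fderiv ℝ (fun y' => fderiv ℝ G (t, z, y') w) y v
      = fderiv ℝ (fderiv ℝ G) (t, z, y) ((0:ℝ), (0:Fin d → ℝ), v) w := by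
  have h2 := (wp_hasY (fderiv ℝ G) hG' t z y).clm_apply (hasFDerivAt_const w y)
  rw [h2.fderiv]
  simp

private lemma wp_sliceZZ (G : ℝ × (Fin d → ℝ) × (Fin d → ℝ) → ℂ)
    (hG' : Differentiable ℝ (fderiv ℝ G)) (t : ℝ) (z y : Fin d → ℝ)
    (w : ℝ × (Fin d → ℝ) × (Fin d → ℝ)) (v : Fin d → ℝ) :
    fderiv ℝ (fun z' => fderiv ℝ G (t, z', y) w) z v
      = fderiv ℝ (fderiv ℝ G) (t, z, y) ((0:ℝ), v, (0:Fin d → ℝ)) w := by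
  have h2 := (wp_hasZ (fderiv ℝ G) hG' t z y).clm_apply (hasFDerivAt_const w z)
  rw [h2.fderiv]
  simp

end WPAux

/-- exact pointwise identity obtained by inserting the two-scale
wave-packet ansatz
`ψ(t,x) = ε^{-d/4} U(t, (x-q(t))/√ε, x/ε) e^{iφ(t,x)/ε}`
into the semiclassical Schrödinger equation with periodic potential. -/
theorem wave_packet_exact_identity (d : ℕ) (hd : 1 ≤ d) (ε : ℝ) (hε : 0 < ε)
    (VΓ V E : (Fin d → ℝ) → ℝ)
    (hVΓ : ContDiff ℝ (⊤ : ℕ∞) VΓ) (hV : ContDiff ℝ (⊤ : ℕ∞) V) (hE : ContDiff ℝ (⊤ : ℕ∞) E)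
    (q p : ℝ → Fin d → ℝ) (q₀ p₀ : Fin d → ℝ)
    (hq0 : q 0 = q₀) (hp0 : p 0 = p₀)
    (hq : ∀ t, HasDerivAt q (fun j => fderiv ℝ E (p t) (Pi.single j 1)) t)
    (hp : ∀ t, HasDerivAt p (fun j => -fderiv ℝ V (q t) (Pi.single j 1)) t)
    (S : ℝ → ℝ)
    (hS : ∀ t, S t = ∫ s in (0:ℝ)..t,
      ((∑ j, p s j * fderiv ℝ E (p s) (Pi.single j 1)) - E (p s) - V (q s)))
    (φ : ℝ → (Fin d → ℝ) → ℝ)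
    (hφ : ∀ t x, φ t x = S t + ∑ j, p t j * (x j - q t j))
    (U : ℝ → (Fin d → ℝ) → (Fin d → ℝ) → ℂ)
    (hU : ContDiff ℝ (⊤ : ℕ∞) (fun w : ℝ × (Fin d → ℝ) × (Fin d → ℝ) => U w.1 w.2.1 w.2.2))
    (ψ : ℝ → (Fin d → ℝ) → ℂ)
    (hψ : ∀ t x, ψ t x = ((ε ^ (-(d : ℝ) / 4) : ℝ) : ℂ)
        * U t (fun j => (x j - q t j) / Real.sqrt ε) (fun j => x j / ε)
        * Complex.exp (Complex.I * (φ t x : ℂ) / (ε : ℂ))) :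
    ∀ (t : ℝ) (x z y : Fin d → ℝ),
      z = (fun j => (x j - q t j) / Real.sqrt ε) →
      y = (fun j => x j / ε) →
      Complex.I * (ε : ℂ) * deriv (fun s => ψ s x) t
          + ((ε ^ 2 / 2 : ℝ) : ℂ) * ∑ j, pd (fun x' => pd (ψ t) j x') j x
          - (VΓ y : ℂ) * ψ t x - (V x : ℂ) * ψ t x
        = ((ε ^ (-(d : ℝ) / 4) : ℝ) : ℂ) * Complex.exp (Complex.I * (φ t x : ℂ) / (ε : ℂ)) *
          ( ( (E (p t) : ℂ) * U t z y
              + (1 / 2 : ℂ) * ∑ j, pd (fun y' => pd (fun y'' => U t z y'') j y') j y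
              + Complex.I * ∑ j, (p t j : ℂ) * pd (fun y' => U t z y') j y
              - (1 / 2 : ℂ) * ((∑ j, (p t j) ^ 2 : ℝ) : ℂ) * U t z y
              - (VΓ y : ℂ) * U t z y )
            + ((V (q t) + Real.sqrt ε * ∑ j, fderiv ℝ V (q t) (Pi.single j 1) * z j
                - V (q t + Real.sqrt ε • z) : ℝ) : ℂ) * U t z y
            + ((Real.sqrt ε : ℝ) : ℂ) *
              ( Complex.I * ∑ j, ((p t j - fderiv ℝ E (p t) (Pi.single j 1) : ℝ) : ℂ)
                    * pd (fun z' => U t z' y) j z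
                + ∑ j, pd (fun y' => pd (fun z' => U t z' y') j z) j y )
            + (ε : ℂ) * ( Complex.I * deriv (fun s => U s z y) t
                + (1 / 2 : ℂ) * ∑ j, pd (fun z' => pd (fun z'' => U t z'' y) j z') j z ) ) := by
  intro t x z y hz hy
  have hεne : (ε : ℂ) ≠ 0 := by exact_mod_cast hε.ne'
  have hsq0 : 0 < Real.sqrt ε := Real.sqrt_pos.2 hε
  set sq := Real.sqrt ε with hsqdef
  have hsqne : sq ≠ 0 := ne_of_gt hsq0
  have hsqε : sq * sq = ε := Real.mul_self_sqrt hε.le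
  have hsqC : (sq : ℂ) ≠ 0 := by exact_mod_cast hsqne
  have hεC : (ε : ℂ) = (sq : ℂ) * (sq : ℂ) := by exact_mod_cast hsqε.symm
  set c := ((ε ^ (-(d : ℝ) / 4) : ℝ) : ℂ) with hcdef
  set F := fun w : ℝ × (Fin d → ℝ) × (Fin d → ℝ) => U w.1 w.2.1 w.2.2 with hFdef
  have hFc : ContDiff ℝ (⊤ : ℕ∞) F := hU
  have hFd : Differentiable ℝ F := hFc.differentiable (by simp)
  have hF'c : ContDiff ℝ (⊤ : ℕ∞) (fderiv ℝ F) := hFc.fderiv_right (by simp)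
  have hF'd : Differentiable ℝ (fderiv ℝ F) := hF'c.differentiable (by simp)
  -- rewriting z, y in smul form
  have hz' : z = sq⁻¹ • (x - q t) := by
    rw [hz]; funext j; simp [div_eq_inv_mul]
  have hy' : y = ε⁻¹ • x := by
    rw [hy]; funext j; simp [div_eq_inv_mul]
  have hxz : ∀ j, x j - q t j = sq * z j := by
    intro j
    rw [hz']
    simp only [Pi.smul_apply, Pi.sub_apply, smul_eq_mul]
    field_simp
  have hqx : q t + sq • z = x := by
    funext j
    have := hxz j
    simp only [Pi.add_apply, Pi.smul_apply, smul_eq_mul]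
    linarith
  -- ψ in terms of F
  have hψ' : ∀ s x', ψ s x' = c * F (s, sq⁻¹ • (x' - q s), ε⁻¹ • x')
      * Complex.exp (Complex.I * (φ s x' : ℂ) / (ε : ℂ)) := by
    intro s x'
    have hA : (fun j => (x' j - q s j) / sq) = sq⁻¹ • (x' - q s) := by
      funext j; simp [div_eq_inv_mul]
    have hB : (fun j => x' j / ε) = ε⁻¹ • x' := by
      funext j; simp [div_eq_inv_mul]
    rw [hψ s x', hA, hB, hFdef]
  -- atoms for the right-hand side
  have hu : U t z y = F (t, z, y) := by rw [hFdef]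
  have hAy : ∀ (j : Fin d) (z'' y'' : Fin d → ℝ), pd (fun y' => U t z'' y') j y''
      = fderiv ℝ F (t, z'', y'') ((0:ℝ), (0:Fin d → ℝ), Pi.single j 1) := by
    intro j z'' y''
    show fderiv ℝ (fun y' => U t z'' y') y'' (Pi.single j 1) = _
    have hfn : (fun y' => U t z'' y') = fun y' => F (t, z'', y') := by rw [hFdef]
    rw [hfn]
    exact wp_sliceY F hFd t z'' y'' _
  have hAz : ∀ (j : Fin d) (z'' y'' : Fin d → ℝ), pd (fun z' => U t z' y'') j z''
      = fderiv ℝ F (t, z'', y'') ((0:ℝ), Pi.single j 1, (0:Fin d → ℝ)) := by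
    intro j z'' y''
    show fderiv ℝ (fun z' => U t z' y'') z'' (Pi.single j 1) = _
    have hfn : (fun z' => U t z' y'') = fun z' => F (t, z', y'') := by rw [hFdef]
    rw [hfn]
    exact wp_sliceZ F hFd t z'' y'' _
  have hAt : deriv (fun s => U s z y) t
      = fderiv ℝ F (t, z, y) ((1:ℝ), (0:Fin d → ℝ), (0:Fin d → ℝ)) := by
    have hfn : (fun s => U s z y) = fun s => F (s, z, y) := by rw [hFdef]
    rw [hfn]
    exact wp_sliceT F hFd t z y
  have hAyy : ∀ j : Fin d, pd (fun y' => pd (fun y'' => U t z y'') j y') j y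
      = fderiv ℝ (fderiv ℝ F) (t, z, y) ((0:ℝ), (0:Fin d → ℝ), Pi.single j 1)
          ((0:ℝ), (0:Fin d → ℝ), Pi.single j 1) := by
    intro j
    have hfn : (fun y' => pd (fun y'' => U t z y'') j y')
        = fun y' => fderiv ℝ F (t, z, y') ((0:ℝ), (0:Fin d → ℝ), Pi.single j 1) :=
      funext fun y' => hAy j z y'
    show fderiv ℝ (fun y' => pd (fun y'' => U t z y'') j y') y (Pi.single j 1) = _
    rw [hfn]
    exact wp_sliceYY F hF'd t z y _ _
  have hAzz : ∀ j : Fin d, pd (fun z' => pd (fun z'' => U t z'' y) j z') j z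
      = fderiv ℝ (fderiv ℝ F) (t, z, y) ((0:ℝ), Pi.single j 1, (0:Fin d → ℝ))
          ((0:ℝ), Pi.single j 1, (0:Fin d → ℝ)) := by
    intro j
    have hfn : (fun z' => pd (fun z'' => U t z'' y) j z')
        = fun z' => fderiv ℝ F (t, z', y) ((0:ℝ), Pi.single j 1, (0:Fin d → ℝ)) :=
      funext fun z' => hAz j z' y
    show fderiv ℝ (fun z' => pd (fun z'' => U t z'' y) j z') z (Pi.single j 1) = _
    rw [hfn]
    exact wp_sliceZZ F hF'd t z y _ _
  have hAyz : ∀ j : Fin d, pd (fun y' => pd (fun z' => U t z' y') j z) j y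
      = fderiv ℝ (fderiv ℝ F) (t, z, y) ((0:ℝ), (0:Fin d → ℝ), Pi.single j 1)
          ((0:ℝ), Pi.single j 1, (0:Fin d → ℝ)) := by
    intro j
    have hfn : (fun y' => pd (fun z' => U t z' y') j z)
        = fun y' => fderiv ℝ F (t, z, y') ((0:ℝ), Pi.single j 1, (0:Fin d → ℝ)) :=
      funext fun y' => hAz j z y'
    show fderiv ℝ (fun y' => pd (fun z' => U t z' y') j z) y (Pi.single j 1) = _
    rw [hfn]
    exact wp_sliceYY F hF'd t z y _ _
  have hsymm : ∀ v w, fderiv ℝ (fderiv ℝ F) (t, z, y) v w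
      = fderiv ℝ (fderiv ℝ F) (t, z, y) w v :=
    fun v w => second_derivative_symmetric (fun θ => (hFd θ).hasFDerivAt)
      ((hF'd (t, z, y)).hasFDerivAt) v w
  -- time derivative of S and φ
  have hqc : Continuous q := by
    rw [continuous_iff_continuousAt]; exact fun s => (hq s).continuousAt
  have hpc : Continuous p := by
    rw [continuous_iff_continuousAt]; exact fun s => (hp s).continuousAt
  have hfEc : Continuous (fderiv ℝ E) := (hE.fderiv_right (m := (⊤ : ℕ∞)) (by simp)).continuous
  have h0c : Continuous (fun s : ℝ =>
      (∑ j, p s j * fderiv ℝ E (p s) (Pi.single j 1)) - E (p s) - V (q s)) := by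
    refine Continuous.sub (Continuous.sub ?_ (hE.continuous.comp hpc)) (hV.continuous.comp hqc)
    refine continuous_finset_sum _ fun j _ => ?_
    exact ((continuous_apply j).comp hpc).mul ((hfEc.comp hpc).clm_apply continuous_const)
  have hS' : HasDerivAt S ((∑ j, p t j * fderiv ℝ E (p t) (Pi.single j 1))
      - E (p t) - V (q t)) t := by
    have hSfun : S = fun u => ∫ s in (0:ℝ)..u,
        ((∑ j, p s j * fderiv ℝ E (p s) (Pi.single j 1)) - E (p s) - V (q s)) := funext hS
    rw [hSfun]
    exact (h0c.integral_hasStrictDerivAt 0 t).hasDerivAt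
  have hsumt : HasDerivAt (fun s => ∑ j, p s j * (x j - q s j))
      (∑ j, ((-fderiv ℝ V (q t) (Pi.single j 1)) * (x j - q t j)
          + p t j * -(fderiv ℝ E (p t) (Pi.single j 1)))) t := by
    refine HasDerivAt.fun_sum fun j _ => ?_
    exact (hasDerivAt_pi.1 (hp t) j).mul ((hasDerivAt_pi.1 (hq t) j).const_sub (x j))
  have hφt : HasDerivAt (fun s => φ s x)
      (-(E (p t)) - V (q t) - sq * ∑ j, fderiv ℝ V (q t) (Pi.single j 1) * z j) t := by
    have hfun : (fun s => φ s x) = fun s => S s + ∑ j, p s j * (x j - q s j) :=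
      funext fun s => hφ s x
    rw [hfun]
    have h := hS'.add hsumt
    refine h.congr_deriv ?_
    rw [Finset.sum_add_distrib]
    have e1 : ∑ j, (-fderiv ℝ V (q t) (Pi.single j 1)) * (x j - q t j)
        = -(sq * ∑ j, fderiv ℝ V (q t) (Pi.single j 1) * z j) := by
      rw [Finset.mul_sum, ← Finset.sum_neg_distrib]
      refine Finset.sum_congr rfl fun j _ => ?_
      rw [hxz j]; ring
    have e2 : ∑ j, p t j * -(fderiv ℝ E (p t) (Pi.single j 1))
        = -∑ j, p t j * fderiv ℝ E (p t) (Pi.single j 1) := by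
      rw [← Finset.sum_neg_distrib]
      exact Finset.sum_congr rfl fun j _ => by ring
    rw [e1, e2]
    ring
  -- spatial derivative machinery
  set LΦ : (Fin d → ℝ) →L[ℝ] ℝ :=
    ∑ j, p t j • (ContinuousLinearMap.proj j : (Fin d → ℝ) →L[ℝ] ℝ) with hLΦdef
  have hLΦ : ∀ j, LΦ (Pi.single j 1) = p t j := by
    intro j
    rw [hLΦdef]
    simp [ContinuousLinearMap.sum_apply, Pi.single_apply, Finset.sum_ite_eq']
  have hφx : ∀ x', HasFDerivAt (fun x'' => φ t x'') LΦ x' := by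
    intro x'
    have h1 : (fun x'' => φ t x'') = fun x'' : Fin d → ℝ =>
        S t + ∑ j, p t j * (x'' j - q t j) := funext fun x'' => hφ t x''
    rw [h1]
    have h2 : ∀ j ∈ Finset.univ, HasFDerivAt (fun x'' : Fin d → ℝ => p t j * (x'' j - q t j))
        (p t j • (ContinuousLinearMap.proj j : (Fin d → ℝ) →L[ℝ] ℝ)) x' := by
      intro j _
      exact (((ContinuousLinearMap.proj j : (Fin d → ℝ) →L[ℝ] ℝ).hasFDerivAt).sub_const
        (q t j)).const_mul (p t j)
    have h3 := (hasFDerivAt_const (S t) x').fun_add (HasFDerivAt.fun_sum h2)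
    simpa using h3
  have hΦx : ∀ x', HasFDerivAt (fun x'' => Complex.exp (Complex.I * (φ t x'' : ℂ) / (ε : ℂ)))
      ((Complex.exp (Complex.I * (φ t x' : ℂ) / (ε : ℂ))) •
        ((Complex.I / (ε : ℂ)) • (Complex.ofRealCLM.comp LΦ))) x' := by
    intro x'
    have hfg : (fun x'' => Complex.I * ((φ t x'' : ℝ) : ℂ) / (ε : ℂ))
        = fun x'' => (Complex.I / (ε : ℂ)) * ((φ t x'' : ℝ) : ℂ) := by
      funext x''; ring
    have hE1 : HasFDerivAt (fun x'' => Complex.I * ((φ t x'' : ℝ) : ℂ) / (ε : ℂ))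
        ((Complex.I / (ε : ℂ)) • (Complex.ofRealCLM.comp LΦ)) x' := by
      rw [hfg]
      exact (Complex.ofRealCLM.hasFDerivAt.comp x' (hφx x')).const_mul (Complex.I / (ε : ℂ))
    exact hE1.cexp
  set Lx : (Fin d → ℝ) →L[ℝ] ℝ × (Fin d → ℝ) × (Fin d → ℝ) :=
    (0 : (Fin d → ℝ) →L[ℝ] ℝ).prod ((sq⁻¹ • ContinuousLinearMap.id ℝ (Fin d → ℝ)).prod
      (ε⁻¹ • ContinuousLinearMap.id ℝ (Fin d → ℝ))) with hLxdef
  have hθcurve : ∀ x', HasFDerivAt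
      (fun x'' : Fin d → ℝ => ((t, sq⁻¹ • (x'' - q t), ε⁻¹ • x'') :
        ℝ × (Fin d → ℝ) × (Fin d → ℝ))) Lx x' := by
    intro x'
    exact (hasFDerivAt_const t x').prodMk
      ((((hasFDerivAt_id x').sub_const (q t)).const_smul sq⁻¹).prodMk
        ((hasFDerivAt_id x').const_smul ε⁻¹))
  have hLx : ∀ j, Lx (Pi.single j 1)
      = ((0:ℝ), sq⁻¹ • (Pi.single j 1 : Fin d → ℝ), ε⁻¹ • (Pi.single j 1 : Fin d → ℝ)) := by
    intro j
    rw [hLxdef]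
    simp
  -- first spatial derivative of ψ t
  have hψfun : ψ t = fun x'' => c * F (t, sq⁻¹ • (x'' - q t), ε⁻¹ • x'')
      * Complex.exp (Complex.I * (φ t x'' : ℂ) / (ε : ℂ)) := funext fun x'' => hψ' t x''
  have hpd1 : ∀ (x' : Fin d → ℝ) (j : Fin d), pd (ψ t) j x'
      = c * Complex.exp (Complex.I * (φ t x' : ℂ) / (ε : ℂ)) *
        ( ((sq : ℂ))⁻¹ * fderiv ℝ F (t, sq⁻¹ • (x' - q t), ε⁻¹ • x')
              ((0:ℝ), Pi.single j 1, (0:Fin d → ℝ))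
          + ((ε : ℂ))⁻¹ * fderiv ℝ F (t, sq⁻¹ • (x' - q t), ε⁻¹ • x')
              ((0:ℝ), (0:Fin d → ℝ), Pi.single j 1)
          + Complex.I * (p t j : ℂ) / (ε : ℂ) * F (t, sq⁻¹ • (x' - q t), ε⁻¹ • x') ) := by
    intro x' j
    show fderiv ℝ (ψ t) x' (Pi.single j 1) = _
    rw [hψfun]
    have hG : HasFDerivAt (fun x'' : Fin d → ℝ => F (t, sq⁻¹ • (x'' - q t), ε⁻¹ • x''))
        ((fderiv ℝ F (t, sq⁻¹ • (x' - q t), ε⁻¹ • x')).comp Lx) x' :=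
      (hFd _).hasFDerivAt.comp x' (hθcurve x')
    have hprod := (hG.const_mul c).fun_mul (hΦx x')
    rw [hprod.fderiv]
    simp only [ContinuousLinearMap.smul_apply, ContinuousLinearMap.add_apply,
      ContinuousLinearMap.comp_apply, ContinuousLinearMap.coe_smul', Pi.smul_apply,
      Complex.ofRealCLM_apply, smul_eq_mul]
    rw [hLx j, wp_split3, hLΦ j]
    simp only [zero_smul, zero_add, smul_eq_mul, Complex.real_smul]
    push_cast
    ring
  have hθx : ((t, sq⁻¹ • (x - q t), ε⁻¹ • x) : ℝ × (Fin d → ℝ) × (Fin d → ℝ)) = (t, z, y) := by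
    rw [hz', hy']
  -- second spatial derivatives
  have hpd2 : ∀ j : Fin d, pd (fun x' => pd (ψ t) j x') j x
      = c * Complex.exp (Complex.I * (φ t x : ℂ) / (ε : ℂ)) *
        ( ((sq : ℂ))⁻¹ * ((sq : ℂ))⁻¹ * fderiv ℝ (fderiv ℝ F) (t, z, y)
              ((0:ℝ), Pi.single j 1, (0:Fin d → ℝ)) ((0:ℝ), Pi.single j 1, (0:Fin d → ℝ))
          + (2 * ((sq : ℂ))⁻¹ * ((ε : ℂ))⁻¹) * fderiv ℝ (fderiv ℝ F) (t, z, y)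
              ((0:ℝ), (0:Fin d → ℝ), Pi.single j 1) ((0:ℝ), Pi.single j 1, (0:Fin d → ℝ))
          + ((ε : ℂ))⁻¹ * ((ε : ℂ))⁻¹ * fderiv ℝ (fderiv ℝ F) (t, z, y)
              ((0:ℝ), (0:Fin d → ℝ), Pi.single j 1) ((0:ℝ), (0:Fin d → ℝ), Pi.single j 1)
          + (2 * Complex.I * ((sq : ℂ))⁻¹ * ((ε : ℂ))⁻¹) *
              ((p t j : ℂ) * fderiv ℝ F (t, z, y) ((0:ℝ), Pi.single j 1, (0:Fin d → ℝ)))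
          + (2 * Complex.I * ((ε : ℂ))⁻¹ * ((ε : ℂ))⁻¹) *
              ((p t j : ℂ) * fderiv ℝ F (t, z, y) ((0:ℝ), (0:Fin d → ℝ), Pi.single j 1))
          - (((ε : ℂ))⁻¹ * ((ε : ℂ))⁻¹ * F (t, z, y)) * ((p t j : ℂ)) ^ 2 ) := by
    intro j
    have hfn : (fun x' => pd (ψ t) j x') = fun x' =>
        c * Complex.exp (Complex.I * (φ t x' : ℂ) / (ε : ℂ)) *
        ( ((sq : ℂ))⁻¹ * fderiv ℝ F (t, sq⁻¹ • (x' - q t), ε⁻¹ • x')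
              ((0:ℝ), Pi.single j 1, (0:Fin d → ℝ))
          + ((ε : ℂ))⁻¹ * fderiv ℝ F (t, sq⁻¹ • (x' - q t), ε⁻¹ • x')
              ((0:ℝ), (0:Fin d → ℝ), Pi.single j 1)
          + Complex.I * (p t j : ℂ) / (ε : ℂ) * F (t, sq⁻¹ • (x' - q t), ε⁻¹ • x') ) :=
      funext fun x' => hpd1 x' j
    show fderiv ℝ (fun x' => pd (ψ t) j x') x (Pi.single j 1) = _
    rw [hfn]
    have hN : HasFDerivAt (fun x' : Fin d → ℝ => fderiv ℝ F (t, sq⁻¹ • (x' - q t), ε⁻¹ • x'))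
        ((fderiv ℝ (fderiv ℝ F) (t, sq⁻¹ • (x - q t), ε⁻¹ • x)).comp Lx) x :=
      (hF'd _).hasFDerivAt.comp x (hθcurve x)
    have hB1 := (hN.clm_apply
      (hasFDerivAt_const ((0:ℝ), (Pi.single j 1 : Fin d → ℝ), (0:Fin d → ℝ)) x)).const_mul
      ((sq : ℂ))⁻¹
    have hB2 := (hN.clm_apply
      (hasFDerivAt_const ((0:ℝ), (0:Fin d → ℝ), (Pi.single j 1 : Fin d → ℝ)) x)).const_mul
      ((ε : ℂ))⁻¹
    have hG : HasFDerivAt (fun x'' : Fin d → ℝ => F (t, sq⁻¹ • (x'' - q t), ε⁻¹ • x''))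
        ((fderiv ℝ F (t, sq⁻¹ • (x - q t), ε⁻¹ • x)).comp Lx) x :=
      (hFd _).hasFDerivAt.comp x (hθcurve x)
    have hB3 := hG.const_mul (Complex.I * (p t j : ℂ) / (ε : ℂ))
    have hBig := ((hΦx x).const_mul c).fun_mul ((hB1.fun_add hB2).fun_add hB3)
    rw [hBig.fderiv]
    simp only [ContinuousLinearMap.smul_apply, ContinuousLinearMap.add_apply,
      ContinuousLinearMap.comp_apply, ContinuousLinearMap.coe_smul', Pi.smul_apply,
      ContinuousLinearMap.flip_apply, ContinuousLinearMap.comp_zero,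
      ContinuousLinearMap.zero_apply, Complex.ofRealCLM_apply, smul_eq_mul]
    rw [hLx j]
    simp only [wp_split3, hLΦ j, hθx]
    simp only [ContinuousLinearMap.add_apply, ContinuousLinearMap.smul_apply,
      ContinuousLinearMap.zero_apply, zero_smul, zero_add, smul_eq_mul, Complex.real_smul]
    rw [hsymm ((0:ℝ), (Pi.single j 1 : Fin d → ℝ), (0:Fin d → ℝ))
      ((0:ℝ), (0:Fin d → ℝ), (Pi.single j 1 : Fin d → ℝ))]
    push_cast
    ring_nf
    simp only [Complex.I_sq]
    ring
  -- the Laplacian sum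
  have hΔeq : ∑ j, pd (fun x' => pd (ψ t) j x') j x
      = c * Complex.exp (Complex.I * (φ t x : ℂ) / (ε : ℂ)) *
        ( ((sq : ℂ))⁻¹ * ((sq : ℂ))⁻¹ * ∑ j, fderiv ℝ (fderiv ℝ F) (t, z, y)
              ((0:ℝ), Pi.single j 1, (0:Fin d → ℝ)) ((0:ℝ), Pi.single j 1, (0:Fin d → ℝ))
          + (2 * ((sq : ℂ))⁻¹ * ((ε : ℂ))⁻¹) * ∑ j, fderiv ℝ (fderiv ℝ F) (t, z, y)
              ((0:ℝ), (0:Fin d → ℝ), Pi.single j 1) ((0:ℝ), Pi.single j 1, (0:Fin d → ℝ))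
          + ((ε : ℂ))⁻¹ * ((ε : ℂ))⁻¹ * ∑ j, fderiv ℝ (fderiv ℝ F) (t, z, y)
              ((0:ℝ), (0:Fin d → ℝ), Pi.single j 1) ((0:ℝ), (0:Fin d → ℝ), Pi.single j 1)
          + (2 * Complex.I * ((sq : ℂ))⁻¹ * ((ε : ℂ))⁻¹) *
              ∑ j, ((p t j : ℂ) * fderiv ℝ F (t, z, y) ((0:ℝ), Pi.single j 1, (0:Fin d → ℝ)))
          + (2 * Complex.I * ((ε : ℂ))⁻¹ * ((ε : ℂ))⁻¹) *
              ∑ j, ((p t j : ℂ) * fderiv ℝ F (t, z, y) ((0:ℝ), (0:Fin d → ℝ), Pi.single j 1))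
          - (((ε : ℂ))⁻¹ * ((ε : ℂ))⁻¹ * F (t, z, y)) * ∑ j, ((p t j : ℂ)) ^ 2 ) := by
    have h1 := Finset.sum_congr rfl fun j (_ : j ∈ Finset.univ) => hpd2 j
    rw [h1, ← Finset.mul_sum, Finset.sum_sub_distrib, Finset.sum_add_distrib,
      Finset.sum_add_distrib, Finset.sum_add_distrib, Finset.sum_add_distrib,
      ← Finset.mul_sum, ← Finset.mul_sum, ← Finset.mul_sum, ← Finset.mul_sum,
      ← Finset.mul_sum, ← Finset.mul_sum]
  -- time derivative of ψ
  have hcurveT : HasDerivAt (fun s => ((s, sq⁻¹ • (x - q s), ε⁻¹ • x) :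
      ℝ × (Fin d → ℝ) × (Fin d → ℝ)))
      ((1:ℝ), sq⁻¹ • -(fun j => fderiv ℝ E (p t) (Pi.single j 1)), (0:Fin d → ℝ)) t :=
    (hasDerivAt_id t).prodMk ((((hq t).const_sub x).const_smul sq⁻¹).prodMk
      (hasDerivAt_const t (ε⁻¹ • x)))
  have hGt : HasDerivAt (fun s => F (s, sq⁻¹ • (x - q s), ε⁻¹ • x))
      (fderiv ℝ F (t, sq⁻¹ • (x - q t), ε⁻¹ • x)
        ((1:ℝ), sq⁻¹ • -(fun j => fderiv ℝ E (p t) (Pi.single j 1)), (0:Fin d → ℝ))) t :=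
    (hFd _).hasFDerivAt.comp_hasDerivAt t hcurveT
  have hΦt : HasDerivAt (fun s => Complex.exp (Complex.I * (φ s x : ℂ) / (ε : ℂ)))
      (Complex.exp (Complex.I * (φ t x : ℂ) / (ε : ℂ)) *
        (Complex.I * ((-(E (p t)) - V (q t)
          - sq * ∑ j, fderiv ℝ V (q t) (Pi.single j 1) * z j : ℝ) : ℂ) / (ε : ℂ))) t := by
    exact ((hφt.ofReal_comp.const_mul Complex.I).div_const (ε : ℂ)).cexp
  have hderivT : HasDerivAt (fun s => ψ s x)
      (c * fderiv ℝ F (t, sq⁻¹ • (x - q t), ε⁻¹ • x)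
          ((1:ℝ), sq⁻¹ • -(fun j => fderiv ℝ E (p t) (Pi.single j 1)), (0:Fin d → ℝ))
         * Complex.exp (Complex.I * (φ t x : ℂ) / (ε : ℂ))
       + c * F (t, sq⁻¹ • (x - q t), ε⁻¹ • x) *
          (Complex.exp (Complex.I * (φ t x : ℂ) / (ε : ℂ)) *
            (Complex.I * ((-(E (p t)) - V (q t)
              - sq * ∑ j, fderiv ℝ V (q t) (Pi.single j 1) * z j : ℝ) : ℂ) / (ε : ℂ)))) t := by
    have hfun : (fun s => ψ s x) = fun s => c * F (s, sq⁻¹ • (x - q s), ε⁻¹ • x)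
        * Complex.exp (Complex.I * (φ s x : ℂ) / (ε : ℂ)) := funext fun s => hψ' s x
    rw [hfun]
    exact (hGt.const_mul c).mul hΦt
  have hT : Complex.I * (ε : ℂ) * deriv (fun s => ψ s x) t
      = c * Complex.exp (Complex.I * (φ t x : ℂ) / (ε : ℂ)) *
        ( Complex.I * (ε : ℂ) * fderiv ℝ F (t, z, y) ((1:ℝ), (0:Fin d → ℝ), (0:Fin d → ℝ))
          - Complex.I * (sq : ℂ) * ∑ j, ((fderiv ℝ E (p t) (Pi.single j 1) : ℝ) : ℂ)
              * fderiv ℝ F (t, z, y) ((0:ℝ), Pi.single j 1, (0:Fin d → ℝ))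
          + ((E (p t) : ℂ) + (V (q t) : ℂ)
              + (sq : ℂ) * ((∑ j, fderiv ℝ V (q t) (Pi.single j 1) * z j : ℝ) : ℂ))
            * F (t, z, y) ) := by
    rw [hderivT.deriv, hθx]
    have hv : ((1:ℝ), sq⁻¹ • -(fun j => fderiv ℝ E (p t) (Pi.single j 1)), (0:Fin d → ℝ))
        = ((1:ℝ), (-sq⁻¹) • (fun j => fderiv ℝ E (p t) (Pi.single j 1)), (0:ℝ) • (0:Fin d → ℝ)) := by
      simp [neg_smul, smul_neg]
    rw [hv, wp_split3, wp_applyZ]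
    simp only [one_smul, zero_smul, add_zero, smul_eq_mul, Complex.real_smul]
    push_cast
    rw [hεC]
    field_simp
    ring_nf
    simp only [Complex.I_sq]
    ring
  -- rescaled Laplacian sum
  have hΔeq2 : ((ε ^ 2 / 2 : ℝ) : ℂ) * ∑ j, pd (fun x' => pd (ψ t) j x') j x
      = c * Complex.exp (Complex.I * (φ t x : ℂ) / (ε : ℂ)) *
        ( ((ε : ℂ) / 2) * ∑ j, fderiv ℝ (fderiv ℝ F) (t, z, y)
              ((0:ℝ), Pi.single j 1, (0:Fin d → ℝ)) ((0:ℝ), Pi.single j 1, (0:Fin d → ℝ))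
          + (sq : ℂ) * ∑ j, fderiv ℝ (fderiv ℝ F) (t, z, y)
              ((0:ℝ), (0:Fin d → ℝ), Pi.single j 1) ((0:ℝ), Pi.single j 1, (0:Fin d → ℝ))
          + (1 / 2 : ℂ) * ∑ j, fderiv ℝ (fderiv ℝ F) (t, z, y)
              ((0:ℝ), (0:Fin d → ℝ), Pi.single j 1) ((0:ℝ), (0:Fin d → ℝ), Pi.single j 1)
          + Complex.I * (sq : ℂ) *
              ∑ j, ((p t j : ℂ) * fderiv ℝ F (t, z, y) ((0:ℝ), Pi.single j 1, (0:Fin d → ℝ)))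
          + Complex.I *
              ∑ j, ((p t j : ℂ) * fderiv ℝ F (t, z, y) ((0:ℝ), (0:Fin d → ℝ), Pi.single j 1))
          - (F (t, z, y) / 2) * ∑ j, ((p t j : ℂ)) ^ 2 ) := by
    have k1 : ((ε:ℂ)^2/2) * (((sq:ℂ))⁻¹ * ((sq:ℂ))⁻¹) = (ε:ℂ)/2 := by
      rw [hεC]; field_simp [hsqC]
    have k2 : ((ε:ℂ)^2/2) * (2 * ((sq:ℂ))⁻¹ * ((ε:ℂ))⁻¹) = (sq:ℂ) := by
      rw [hεC]; field_simp [hsqC]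
    have k3 : ((ε:ℂ)^2/2) * (((ε:ℂ))⁻¹ * ((ε:ℂ))⁻¹) = 1/2 := by
      rw [hεC]; field_simp [hsqC]
    have k4 : ((ε:ℂ)^2/2) * (2 * Complex.I * ((sq:ℂ))⁻¹ * ((ε:ℂ))⁻¹) = Complex.I * (sq:ℂ) := by
      rw [hεC]; field_simp [hsqC]
    have k5 : ((ε:ℂ)^2/2) * (2 * Complex.I * ((ε:ℂ))⁻¹ * ((ε:ℂ))⁻¹) = Complex.I := by
      rw [hεC]; field_simp [hsqC]
    rw [hΔeq]
    push_cast
    linear_combination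
      ((c * Complex.exp (Complex.I * (φ t x : ℂ) / (ε : ℂ)) *
        ∑ j, fderiv ℝ (fderiv ℝ F) (t, z, y)
          ((0:ℝ), Pi.single j 1, (0:Fin d → ℝ)) ((0:ℝ), Pi.single j 1, (0:Fin d → ℝ))) * k1)
      + ((c * Complex.exp (Complex.I * (φ t x : ℂ) / (ε : ℂ)) *
        ∑ j, fderiv ℝ (fderiv ℝ F) (t, z, y)
          ((0:ℝ), (0:Fin d → ℝ), Pi.single j 1) ((0:ℝ), Pi.single j 1, (0:Fin d → ℝ))) * k2)
      + ((c * Complex.exp (Complex.I * (φ t x : ℂ) / (ε : ℂ)) *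
        ∑ j, fderiv ℝ (fderiv ℝ F) (t, z, y)
          ((0:ℝ), (0:Fin d → ℝ), Pi.single j 1) ((0:ℝ), (0:Fin d → ℝ), Pi.single j 1)) * k3)
      + ((c * Complex.exp (Complex.I * (φ t x : ℂ) / (ε : ℂ)) *
        ∑ j, ((p t j : ℂ) * fderiv ℝ F (t, z, y) ((0:ℝ), Pi.single j 1, (0:Fin d → ℝ)))) * k4)
      + ((c * Complex.exp (Complex.I * (φ t x : ℂ) / (ε : ℂ)) *
        ∑ j, ((p t j : ℂ) * fderiv ℝ F (t, z, y) ((0:ℝ), (0:Fin d → ℝ), Pi.single j 1))) * k5)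
      - ((c * Complex.exp (Complex.I * (φ t x : ℂ) / (ε : ℂ)) * F (t, z, y) *
        ∑ j, ((p t j : ℂ)) ^ 2) * k3)
  -- final assembly
  have hψtx : ψ t x = c * F (t, z, y)
      * Complex.exp (Complex.I * (φ t x : ℂ) / (ε : ℂ)) := by
    rw [hψ' t x, hθx]
  rw [hT, hΔeq2, hψtx, hqx]
  simp only [hAyy, hAzz, hAyz]
  simp only [hAy, hAz, hAt, hu]
  push_cast
  simp only [sub_mul, Finset.sum_sub_distrib]
  ring
end
end

section
/- Let 𝓗 be a complex Hilbert space, H : ℝ → (𝓗 →L[ℂ] 𝓗) a differentiable family of bounded self-adjoint operators, E : ℝ → ℝ differentiable, and χ : ℝ → 𝓗 differentiable with ‖χ(k)‖ = 1 and H(k)χ(k) = E(k)·χ(k) for every k ∈ ℝ. Then for every k ∈ ℝ the Hellmann–Feynman formula holds: E'(k) = ⟨χ(k), H'(k) χ(k)⟩, i.e. the inner product ⟨χ(k), H'(k)χ(k)⟩ is real and equals the derivative of the eigenvalue. -/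
/-! Differentiating the identity `⟪χ, H χ⟫ = E` gives
`E' = ⟪χ, H' χ⟫ + E (⟪χ, χ'⟫ + ⟪χ', χ⟫)`, using self-adjointness of `H` and the eigenvalue
equation to move `H` off `χ'`; the bracket is the derivative of `‖χ‖² = 1`, hence zero. -/

open scoped InnerProductSpace

theorem HasDerivAt.clm_apply_restrictScalars {𝕜 𝕜' E F : Type*} [NontriviallyNormedField 𝕜]
    [NontriviallyNormedField 𝕜'] [NormedAlgebra 𝕜 𝕜']
    [NormedAddCommGroup E] [NormedSpace 𝕜' E] [NormedSpace 𝕜 E] [IsScalarTower 𝕜 𝕜' E]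
    [NormedAddCommGroup F] [NormedSpace 𝕜' F] [NormedSpace 𝕜 F] [IsScalarTower 𝕜 𝕜' F]
    {c : 𝕜 → E →L[𝕜'] F} {c' : E →L[𝕜'] F} {u : 𝕜 → E} {u' : E} {x : 𝕜}
    (hc : HasDerivAt c c' x) (hu : HasDerivAt u u' x) :
    HasDerivAt (fun y => c y (u y)) (c' (u x) + c x u') x :=
  ((ContinuousLinearMap.restrictScalarsL 𝕜' E F 𝕜 𝕜).hasFDerivAt.comp_hasDerivAt x hc).clm_apply hu

section Inner

variable {𝕜 E : Type*} [RCLike 𝕜] [NormedAddCommGroup E] [InnerProductSpace 𝕜 E]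

theorem inner_apply_eq_of_apply_eq_smul_of_norm_eq_one {T : E →L[𝕜] E} {x : E} {c : 𝕜}
    (hx : T x = c • x) (hnorm : ‖x‖ = 1) : ⟪x, T x⟫_𝕜 = c := by
  rw [hx, inner_smul_right, inner_self_eq_norm_sq_to_K, hnorm]
  simp

theorem IsSelfAdjoint.inner_apply_of_apply_eq_smul [CompleteSpace E] {T : E →L[𝕜] E}
    (hT : IsSelfAdjoint T) {x : E} {c : ℝ} (hx : T x = (c : 𝕜) • x) (y : E) :
    ⟪x, T y⟫_𝕜 = c * ⟪x, y⟫_𝕜 := by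
  rw [← ContinuousLinearMap.adjoint_inner_left, hT.adjoint_eq, hx, inner_smul_left,
    RCLike.conj_ofReal]

theorem HasDerivAt.inner_add_inner_eq_zero_of_norm_eq [NormedSpace ℝ E] {χ : ℝ → E} {χ' : E}
    {k r : ℝ} (hχ : HasDerivAt χ χ' k) (hnorm : ∀ t, ‖χ t‖ = r) :
    ⟪χ k, χ'⟫_𝕜 + ⟪χ', χ k⟫_𝕜 = 0 := by
  have hconst : (fun t => ⟪χ t, χ t⟫_𝕜) = fun _ => ((r ^ 2 : ℝ) : 𝕜) := by
    funext t
    rw [inner_self_eq_norm_sq_to_K, hnorm t, RCLike.ofReal_pow]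
  have hderiv := hχ.inner 𝕜 hχ
  rw [hconst] at hderiv
  exact hderiv.unique (hasDerivAt_const k _)

end Inner

/-- the Hellmann–Feynman formula `E'(k) = ⟨χ(k), H'(k) χ(k)⟩` for a
differentiable family of bounded self-adjoint operators with normalized
differentiable eigenvectors. -/
theorem hellmann_feynman {𝓗 : Type*} [NormedAddCommGroup 𝓗]
    [InnerProductSpace ℂ 𝓗] [CompleteSpace 𝓗]
    (H H' : ℝ → 𝓗 →L[ℂ] 𝓗) (E E' : ℝ → ℝ) (χ χ' : ℝ → 𝓗)
    (hHsa : ∀ k, IsSelfAdjoint (H k))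
    (hH : ∀ k, HasDerivAt H (H' k) k)
    (hE : ∀ k, HasDerivAt E (E' k) k)
    (hχ : ∀ k, HasDerivAt χ (χ' k) k)
    (hnorm : ∀ k, ‖χ k‖ = 1)
    (heig : ∀ k, H k (χ k) = (E k : ℂ) • χ k) :
    ∀ k : ℝ, (inner ℂ (χ k) (H' k (χ k)) : ℂ) = (E' k : ℂ) := by
  intro k
  have hexpect : (fun t => ⟪χ t, H t (χ t)⟫_ℂ) = fun t => (E t : ℂ) :=
    funext fun t => inner_apply_eq_of_apply_eq_smul_of_norm_eq_one (heig t) (hnorm t)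
  have hderiv := (hχ k).inner ℂ ((hH k).clm_apply_restrictScalars (hχ k))
  rw [hexpect] at hderiv
  have hE' := hderiv.unique (hE k).ofReal_comp
  rw [inner_add_right, (hHsa k).inner_apply_of_apply_eq_smul (heig k), heig k,
    inner_smul_right] at hE'
  have hnormal := (hχ k).inner_add_inner_eq_zero_of_norm_eq (𝕜 := ℂ) hnorm
  linear_combination hE' - (E k : ℂ) * hnormal
end

section
/- Fix d ≥ 1 and continuous maps M, N : ℝ → Matrix (Fin d) (Fin d) ℝ with M(t) and N(t) symmetric for every t, and let A, B : ℝ → Matrix (Fin d) (Fin d) ℂ be differentiable with A'(t) = i M(t) B(t) and B'(t) = i N(t) A(t) for all t. Then the matrix A(t)ᵀ B(t) − B(t)ᵀ A(t) is constant in t: A(t)ᵀ B(t) − B(t)ᵀ A(t) = A(0)ᵀ B(0) − B(0)ᵀ A(0) for all t ∈ ℝ. -/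
open Matrix

/-! The Wronskian `W(A, B) = Aᵀ B - Bᵀ A` is bilinear, so by the product rule its derivative
along the flow is
`W(i M B, B) + W(A, i N A) = i (Bᵀ Mᵀ B - Bᵀ M B) + i (Aᵀ N A - Aᵀ Nᵀ A)`,
which vanishes because `M` and `N` are symmetric. A function with zero derivative is constant. -/

section Wronskian

variable {m n : Type*} [Fintype m] {R : Type*} [CommRing R]

def Matrix.wronskian (A B : Matrix m n R) : Matrix n n R := Aᵀ * B - Bᵀ * A

theorem Matrix.wronskian_smul_left (c : R) (A B : Matrix m n R) :
    wronskian (c • A) B = c • wronskian A B := by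
  simp only [wronskian, transpose_smul, Matrix.smul_mul, Matrix.mul_smul, smul_sub]

theorem Matrix.wronskian_smul_right (c : R) (A B : Matrix m n R) :
    wronskian A (c • B) = c • wronskian A B := by
  simp only [wronskian, transpose_smul, Matrix.smul_mul, Matrix.mul_smul, smul_sub]

theorem Matrix.wronskian_mul_self_of_isSymm {M : Matrix m m R} (hM : M.IsSymm)
    (B : Matrix m n R) :
    wronskian (M * B) B = 0 := by
  rw [wronskian, transpose_mul, hM.eq, Matrix.mul_assoc, sub_self]

theorem Matrix.wronskian_self_mul_of_isSymm {N : Matrix m m R} (hN : N.IsSymm)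
    (A : Matrix m n R) :
    wronskian A (N * A) = 0 := by
  rw [wronskian, transpose_mul, hN.eq, Matrix.mul_assoc, sub_self]

end Wronskian

section EntrywiseDeriv

variable {𝕜 : Type*} [NontriviallyNormedField 𝕜] {l m n : Type*} [Fintype m] {t : 𝕜}

theorem Matrix.hasDerivAt_mul_apply {R : Type*} [NormedRing R] [NormedAlgebra 𝕜 R]
    {A : 𝕜 → Matrix l m R} {B : 𝕜 → Matrix m n R} {A' : Matrix l m R} {B' : Matrix m n R}
    (hA : ∀ i j, HasDerivAt (fun s => A s i j) (A' i j) t)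
    (hB : ∀ i j, HasDerivAt (fun s => B s i j) (B' i j) t) (i : l) (k : n) :
    HasDerivAt (fun s => (A s * B s) i k) ((A' * B t + A t * B') i k) t := by
  simp only [mul_apply, add_apply, ← Finset.sum_add_distrib]
  exact HasDerivAt.fun_sum fun j _ => (hA i j).fun_mul (hB j k)

theorem Matrix.hasDerivAt_wronskian_apply {R : Type*} [NormedCommRing R] [NormedAlgebra 𝕜 R]
    {A B : 𝕜 → Matrix m n R} {A' B' : Matrix m n R}
    (hA : ∀ i j, HasDerivAt (fun s => A s i j) (A' i j) t)
    (hB : ∀ i j, HasDerivAt (fun s => B s i j) (B' i j) t) (i j : n) :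
    HasDerivAt (fun s => wronskian (A s) (B s) i j)
      ((wronskian A' (B t) + wronskian (A t) B') i j) t := by
  have hAt : ∀ i j, HasDerivAt (fun s => (A s)ᵀ i j) (A'ᵀ i j) t := fun i j => hA j i
  have hBt : ∀ i j, HasDerivAt (fun s => (B s)ᵀ i j) (B'ᵀ i j) t := fun i j => hB j i
  refine ((hasDerivAt_mul_apply hAt hB i j).fun_sub
    (hasDerivAt_mul_apply hBt hA i j)).congr_deriv ?_
  simp only [wronskian, add_apply, sub_apply]
  abel

end EntrywiseDeriv

theorem Matrix.eq_of_hasDerivAt_apply_eq_zero {𝕜 : Type*} [RCLike 𝕜] {E : Type*}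
    [NormedAddCommGroup E] [NormedSpace 𝕜 E] {m n : Type*} {W : 𝕜 → Matrix m n E}
    (hW : ∀ t i j, HasDerivAt (fun s => W s i j) 0 t) (x y : 𝕜) : W x = W y := by
  ext i j
  exact is_const_of_deriv_eq_zero (fun s => (hW s i j).differentiableAt)
    (fun s => (hW s i j).deriv) x y

theorem wronskian_transpose_invariant_general (d : ℕ)
    (M N : ℝ → Matrix (Fin d) (Fin d) ℝ)
    (hMsym : ∀ t, (M t)ᵀ = M t) (hNsym : ∀ t, (N t)ᵀ = N t)
    (A B : ℝ → Matrix (Fin d) (Fin d) ℂ)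
    (hA : ∀ t, ∀ i j, HasDerivAt (fun s => A s i j)
        ((Complex.I • ((M t).map (fun x => (x : ℂ)) * B t)) i j) t)
    (hB : ∀ t, ∀ i j, HasDerivAt (fun s => B s i j)
        ((Complex.I • ((N t).map (fun x => (x : ℂ)) * A t)) i j) t) :
    ∀ t : ℝ, (A t)ᵀ * B t - (B t)ᵀ * A t = (A 0)ᵀ * B 0 - (B 0)ᵀ * A 0 := by
  have hW : ∀ t i j, HasDerivAt (fun s => wronskian (A s) (B s) i j) 0 t := by
    intro t i j
    have h := hasDerivAt_wronskian_apply (hA t) (hB t) i j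
    rwa [wronskian_smul_left, wronskian_smul_right,
      wronskian_mul_self_of_isSymm (IsSymm.map (hMsym t) _),
      wronskian_self_mul_of_isSymm (IsSymm.map (hNsym t) _), smul_zero, add_zero,
      Matrix.zero_apply] at h
  exact fun t => eq_of_hasDerivAt_apply_eq_zero hW t 0

/-- along the flow `A' = i M(t) B`, `B' = i N(t) A` with `M(t)`,
`N(t)` real symmetric, the matrix `Aᵀ B - Bᵀ A` is constant in time. -/
theorem wronskian_transpose_invariant (d : ℕ) (hd : 1 ≤ d)
    (M N : ℝ → Matrix (Fin d) (Fin d) ℝ)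
    (hMc : Continuous M) (hNc : Continuous N)
    (hMsym : ∀ t, (M t)ᵀ = M t) (hNsym : ∀ t, (N t)ᵀ = N t)
    (A B : ℝ → Matrix (Fin d) (Fin d) ℂ)
    (hA : ∀ t, ∀ i j, HasDerivAt (fun s => A s i j)
        ((Complex.I • ((M t).map (fun x => (x : ℂ)) * B t)) i j) t)
    (hB : ∀ t, ∀ i j, HasDerivAt (fun s => B s i j)
        ((Complex.I • ((N t).map (fun x => (x : ℂ)) * A t)) i j) t) :
    ∀ t : ℝ, (A t)ᵀ * B t - (B t)ᵀ * A t = (A 0)ᵀ * B 0 - (B 0)ᵀ * A 0 :=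
  wronskian_transpose_invariant_general d M N hMsym hNsym A B hA hB
end
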